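/- arXiv:1903.04397 — 2 statements merged into one kernel-verified Lean document; each statement's English description precedes it below -/
import Mathlib

section
/- Fix α ∈ (0,2] and v ∈ (0,1). Let g : ℝ → ℂ be infinitely differentiable with compact support contained in the ring {η ∈ ℝ : 2π/3 ≤ |η| ≤ 8π/3}, and for (j,k) ∈ ℤ² and x ∈ ℝ set w^v_{α,j,k}(x) := 2^{−jv}(ψ^v(2^j x − k) − ψ^v(−k)), where ψ^v(y) := ∫_ℝ e^{iyη} g(η) |η|^{−(v+1/α)} dη. Then for all constants L > 0 and M > 0 there exists a constant c > 0, depending only on L, v, α, M and g, such that for every x ∈ [−M, M], every integer j ≤ 0 and every k ∈ ℤ, one has |w^v_{α,j,k}(x)| ≤ c · 2^{(1−v)j} (2 + |k|)^{−L}. -/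
/-!
`ψ^v(y)` is the Fourier transform, evaluated at `-y / 2π`, of `g(η) |η|^{-(v+1/α)}`; since `g`
vanishes near `0` this symbol is smooth with compact support, so `ψ^v` is a Schwartz function.
For `|y| ≤ M` the mean value theorem bounds `|ψ^v(a + y) - ψ^v(a)|` by `|y|` times the sup of
`|(ψ^v)'|` on `[a - M, a + M]`, and Peetre's inequality `1 + |a| ≤ (1 + M)(1 + |u|)` transfers the
rapid decay of `(ψ^v)'` from `u` to `a`. With `a = -k`, `y = 2^j x` (so `|y| ≤ 2^j M`), the
prefactor `2^{-jv}` combines with `2^j` into `2^{(1-v)j}`.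
-/

open MeasureTheory

/-- The function `ψ^v(y) = ∫_ℝ e^{iyη} g(η) |η|^{-(v+1/α)} dη`. -/
noncomputable def psiV (α v : ℝ) (g : ℝ → ℂ) (y : ℝ) : ℂ :=
  ∫ η : ℝ, Complex.exp (Complex.I * (y : ℂ) * (η : ℂ)) * g η * ((|η| ^ (-(v + 1 / α)) : ℝ) : ℂ)

/-- The wavelet-type coefficient `w^v_{α,j,k}(x) = 2^{-jv} (ψ^v(2^j x - k) - ψ^v(-k))`. -/
noncomputable def wCoef (α v : ℝ) (g : ℝ → ℂ) (j k : ℤ) (x : ℝ) : ℂ :=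
  (((2 : ℝ) ^ (-(j : ℝ) * v) : ℝ) : ℂ) *
    (psiV α v g ((2 : ℝ) ^ (j : ℝ) * x - (k : ℝ)) - psiV α v g (-(k : ℝ)))

open Real SchwartzMap FourierTransform

theorem contDiff_mul_abs_rpow {g : ℝ → ℂ} {n : ℕ∞} (hg : ContDiff ℝ n g)
    (h0 : (0 : ℝ) ∉ tsupport g) (s : ℝ) :
    ContDiff ℝ n fun η => g η * ((|η| ^ s : ℝ) : ℂ) := by
  refine contDiff_iff_contDiffAt.2 fun η => ?_
  rcases eq_or_ne η 0 with rfl | hη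
  · refine (contDiffAt_const (c := (0 : ℂ))).congr_of_eventuallyEq ?_
    filter_upwards [notMem_tsupport_iff_eventuallyEq.1 h0] with ζ hζ
    simp [hζ]
  · exact hg.contDiffAt.mul <| Complex.ofRealCLM.contDiff.contDiffAt.comp η <|
      (contDiffAt_abs hη).rpow_const_of_ne (abs_ne_zero.2 hη)

theorem psiV_eq_fourier (α v : ℝ) (g : ℝ → ℂ) (y : ℝ) :
    psiV α v g y = 𝓕 (fun η => g η * ((|η| ^ (-(v + 1 / α)) : ℝ) : ℂ)) (-y / (2 * π)) := by
  rw [Real.fourier_real_eq_integral_exp_smul, psiV]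
  congr 1 with η
  have : ((-2 * π * η * (-y / (2 * π)) : ℝ) : ℂ) * Complex.I = Complex.I * y * η := by
    push_cast; field_simp
  rw [this, smul_eq_mul, mul_assoc]

theorem hasCompactSupport_and_zero_notMem_tsupport_of_subset_annulus {E : Type*} [Zero E]
    {g : ℝ → E} {a b : ℝ} (ha : 0 < a) (hg : tsupport g ⊆ {η : ℝ | a ≤ |η| ∧ |η| ≤ b}) :
    HasCompactSupport g ∧ (0 : ℝ) ∉ tsupport g := by
  refine ⟨(isCompact_closedBall 0 b).of_isClosed_subset (isClosed_tsupport g) fun η hη => ?_,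
    fun h0 => ?_⟩
  · simpa using (hg hη).2
  · have := (hg h0).1
    rw [abs_zero] at this
    linarith

theorem exists_schwartzMap_coe_eq_psiV (α v : ℝ) {g : ℝ → ℂ} (hg : ContDiff ℝ (⊤ : ℕ∞) g)
    (hcpt : HasCompactSupport g) (h0 : (0 : ℝ) ∉ tsupport g) :
    ∃ Ψ : 𝓢(ℝ, ℂ), ⇑Ψ = psiV α v g := by
  let φ := hcpt.mul_right.toSchwartzMap (contDiff_mul_abs_rpow hg h0 (-(v + 1 / α)))
  let scale : ℝ ≃L[ℝ] ℝ := ContinuousLinearEquiv.unitsEquivAut ℝ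
    (Units.mk0 (-(2 * π)⁻¹) (by simp [pi_ne_zero]))
  refine ⟨compCLMOfContinuousLinearEquiv ℂ scale (𝓕 φ), funext fun y => ?_⟩
  rw [psiV_eq_fourier, neg_div, div_eq_mul_inv y, ← mul_neg]
  rfl

theorem one_add_abs_le_mul_one_add_abs_of_abs_sub_le {p u R : ℝ} (hR : 0 ≤ R) (hu : |u - p| ≤ R) :
    1 + |p| ≤ (1 + R) * (1 + |u|) := by
  have := abs_sub_abs_le_abs_sub p u
  rw [abs_sub_comm] at hu
  nlinarith [abs_nonneg u]

theorem SchwartzMap.exists_one_add_pow_mul_norm_deriv_le (F : 𝓢(ℝ, ℂ)) (n : ℕ) :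
    ∃ D, ∀ u : ℝ, (1 + |u|) ^ n * ‖deriv F u‖ ≤ D := by
  refine ⟨2 ^ n * (Finset.Iic (n, 0)).sup (fun m => SchwartzMap.seminorm ℝ m.1 m.2)
    (derivCLM ℝ ℂ F), fun u => ?_⟩
  have := one_add_le_sup_seminorm_apply (𝕜 := ℝ) (m := (n, 0)) le_rfl le_rfl (derivCLM ℝ ℂ F) u
  rwa [norm_iteratedFDeriv_zero, derivCLM_apply, Real.norm_eq_abs] at this

theorem SchwartzMap.exists_norm_sub_mul_one_add_pow_le (F : 𝓢(ℝ, ℂ)) (n : ℕ) {R : ℝ}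
    (hR : 0 ≤ R) :
    ∃ C, ∀ a y : ℝ, |y| ≤ R → ‖F (a + y) - F a‖ * (1 + |a|) ^ n ≤ C * |y| := by
  obtain ⟨D, hD⟩ := F.exists_one_add_pow_mul_norm_deriv_le n
  refine ⟨(1 + R) ^ n * D, fun a y hy => ?_⟩
  have hbound : ∀ u ∈ Metric.closedBall a R,
      ‖deriv F u‖ ≤ (1 + R) ^ n * D / (1 + |a|) ^ n := by
    intro u hu
    rw [le_div_iff₀ (by positivity)]
    calc ‖deriv F u‖ * (1 + |a|) ^ n ≤ ‖deriv F u‖ * ((1 + R) ^ n * (1 + |u|) ^ n) := by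
          rw [← mul_pow]
          gcongr
          exact one_add_abs_le_mul_one_add_abs_of_abs_sub_le hR hu
      _ = (1 + R) ^ n * ((1 + |u|) ^ n * ‖deriv F u‖) := by ring
      _ ≤ (1 + R) ^ n * D := by gcongr; exact hD u
  have hmvt := (convex_closedBall a R).norm_image_sub_le_of_norm_deriv_le
    (fun u _ => F.differentiableAt) hbound (Metric.mem_closedBall_self hR)
    (by rwa [Metric.mem_closedBall, Real.dist_eq, add_sub_cancel_left])
  rwa [Real.norm_eq_abs, add_sub_cancel_left, div_mul_eq_mul_div,
    le_div_iff₀ (by positivity)] at hmvt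

theorem SchwartzMap.exists_norm_sub_le_mul_rpow (F : 𝓢(ℝ, ℂ)) (L : ℝ) {R : ℝ} (hR : 0 ≤ R) :
    ∃ C, 0 < C ∧ ∀ a y : ℝ, |y| ≤ R → ‖F (a + y) - F a‖ ≤ C * |y| * (2 + |a|) ^ (-L) := by
  set n := ⌈L⌉₊
  obtain ⟨C, hC⟩ := F.exists_norm_sub_mul_one_add_pow_le n hR
  refine ⟨2 ^ n * max C 1, by positivity, fun a y hy => ?_⟩
  have hL : (2 + |a|) ^ (-(n : ℝ)) ≤ (2 + |a|) ^ (-L) :=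
    rpow_le_rpow_of_exponent_le (by linarith [abs_nonneg a]) (neg_le_neg (Nat.le_ceil L))
  rw [rpow_neg (by positivity), rpow_natCast] at hL
  calc ‖F (a + y) - F a‖ ≤ 2 ^ n * max C 1 * |y| / (2 + |a|) ^ n := by
        rw [le_div_iff₀ (by positivity)]
        calc ‖F (a + y) - F a‖ * (2 + |a|) ^ n
            ≤ ‖F (a + y) - F a‖ * (2 ^ n * (1 + |a|) ^ n) := by
              rw [← mul_pow]; gcongr; linarith [abs_nonneg a]
          _ = 2 ^ n * (‖F (a + y) - F a‖ * (1 + |a|) ^ n) := by ring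
          _ ≤ 2 ^ n * (max C 1 * |y|) := by
              have := le_max_left C 1
              exact mul_le_mul_of_nonneg_left ((hC a y hy).trans (by gcongr)) (by positivity)
          _ = 2 ^ n * max C 1 * |y| := by ring
    _ ≤ 2 ^ n * max C 1 * |y| * (2 + |a|) ^ (-L) := by
        rw [div_eq_mul_inv]; gcongr

theorem stmt_4_general (α v : ℝ)
    (g : ℝ → ℂ) (hg : ContDiff ℝ (⊤ : ℕ∞) g)
    (hgsupp : tsupport g ⊆ {η : ℝ | 2 * Real.pi / 3 ≤ |η| ∧ |η| ≤ 8 * Real.pi / 3})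
    (L M : ℝ) (hM : 0 < M) :
    ∃ c : ℝ, 0 < c ∧ ∀ x : ℝ, x ∈ Set.Icc (-M) M → ∀ j : ℤ, j ≤ 0 → ∀ k : ℤ,
      ‖wCoef α v g j k x‖ ≤
        c * (2 : ℝ) ^ ((1 - v) * (j : ℝ)) * (2 + |(k : ℝ)|) ^ (-L) := by
  obtain ⟨hcpt, h0⟩ := hasCompactSupport_and_zero_notMem_tsupport_of_subset_annulus
    (by positivity) hgsupp
  obtain ⟨Ψ, hΨ⟩ := exists_schwartzMap_coe_eq_psiV α v hg hcpt h0
  obtain ⟨C, hC, hΨ_sub⟩ := Ψ.exists_norm_sub_le_mul_rpow L hM.le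
  refine ⟨C * M, by positivity, fun x hx j hj k => ?_⟩
  have htj : (2 : ℝ) ^ (j : ℝ) ≤ 1 := rpow_le_one_of_one_le_of_nonpos one_le_two (mod_cast hj)
  have hy : |2 ^ (j : ℝ) * x| ≤ 2 ^ (j : ℝ) * M := by
    rw [abs_mul, abs_of_pos (by positivity)]
    gcongr
    exact abs_le.2 hx
  have hΨ_k := hΨ_sub (-k) (2 ^ (j : ℝ) * x) (hy.trans (mul_le_of_le_one_left hM.le htj))
  rw [add_comm, ← sub_eq_add_neg, abs_neg] at hΨ_k
  rw [wCoef, norm_mul, ← hΨ, Complex.norm_real, norm_of_nonneg (by positivity)]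
  calc (2 : ℝ) ^ (-(j : ℝ) * v) * ‖Ψ (2 ^ (j : ℝ) * x - k) - Ψ (-k)‖
      ≤ 2 ^ (-(j : ℝ) * v) * (C * (2 ^ (j : ℝ) * M) * (2 + |(k : ℝ)|) ^ (-L)) := by
        gcongr
        exact hΨ_k.trans (by gcongr)
    _ = C * M * (2 ^ (-(j : ℝ) * v) * 2 ^ (j : ℝ)) * (2 + |(k : ℝ)|) ^ (-L) := by ring
    _ = C * M * 2 ^ ((1 - v) * (j : ℝ)) * (2 + |(k : ℝ)|) ^ (-L) := by
        rw [← rpow_add two_pos]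
        ring_nf

/-- For `α ∈ (0,2]`, `v ∈ (0,1)`, `g` smooth with compact support in the ring
`{η : 2π/3 ≤ |η| ≤ 8π/3}`, and all `L > 0` and `M > 0`, there is a constant `c > 0` (depending
only on `L, v, α, M, g`) such that for all `x ∈ [-M, M]`, all integers `j ≤ 0` and all `k ∈ ℤ`:
`|w^v_{α,j,k}(x)| ≤ c 2^{(1-v)j} (2 + |k|)^{-L}`. -/
theorem stmt_4 (α v : ℝ) (hα : 0 < α) (hα2 : α ≤ 2) (hv : 0 < v) (hv1 : v < 1)
    (g : ℝ → ℂ) (hg : ContDiff ℝ (⊤ : ℕ∞) g)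
    (hgsupp : tsupport g ⊆ {η : ℝ | 2 * Real.pi / 3 ≤ |η| ∧ |η| ≤ 8 * Real.pi / 3})
    (L M : ℝ) (hL : 0 < L) (hM : 0 < M) :
    ∃ c : ℝ, 0 < c ∧ ∀ x : ℝ, x ∈ Set.Icc (-M) M → ∀ j : ℤ, j ≤ 0 → ∀ k : ℤ,
      ‖wCoef α v g j k x‖ ≤
        c * (2 : ℝ) ^ ((1 - v) * (j : ℝ)) * (2 + |(k : ℝ)|) ^ (-L) :=
  stmt_4_general α v g hg hgsupp L M hM
end

section
/- Let α ∈ [1,2], N ≥ 1 an integer, H = (H_1,…,H_N) ∈ (0,1)^N, and 0 < a < b constants. For every integer n ≥ 2 there exists a constant c(n) > 0 such that for all t^1,…,t^n ∈ [a,b]^N there exists an n×n real lower-triangular matrix A = (a_{ij}) with a_{ii} = 1 for all 1 ≤ i ≤ n (A may depend on t^1,…,t^n) such that for all u = (u_1,…,u_n) ∈ ℝ^n, writing (v_1,…,v_n) := uA, one has ( ∫_{ℝ^N} | ∑_{j=1}^n u_j F(t^j,λ) |^α dλ )^{1/α} ≥ c(n) [ |v_1| · ( ∫_{ℝ^N}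 |F(t^1,λ)|^α dλ )^{1/α} + ∑_{j=2}^n |v_j| · dist_α( F(t^j,·), span_ℝ{F(t^1,·),…,F(t^{j−1},·)} ) ], where dist_α(f, V) := inf{ (∫_{ℝ^N}|f(λ) − h(λ)|^α dλ)^{1/α} : h ∈ V }. -/
open MeasureTheory

/-- The harmonizable kernel `F(t,λ) = ∏_l (e^{i t_l λ_l} - 1)|λ_l|^{-(H_l + 1/α)}` (with the
convention that a factor equals `0` when `λ_l = 0`, which is automatic here since
`0^x = 0` for `x ≠ 0` in `Real.rpow` and `e^{i t_l 0} - 1 = 0`). -/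
noncomputable def Fker (α : ℝ) (N : ℕ) (H : Fin N → ℝ) (t lam : Fin N → ℝ) : ℂ :=
  ∏ l : Fin N, (Complex.exp (Complex.I * (t l : ℂ) * (lam l : ℂ)) - 1) *
    ((|lam l| ^ (-(H l + 1 / α)) : ℝ) : ℂ)

/-!
In any real normed space the estimate holds for vectors `f 0, …, f (n-1)` with
`c(n) = 1 / (2 ^ n - 1)`; it is applied in `L^α`, where the kernels live. Induct on `n`. Since
the span `V` of the first `n - 1` vectors is finite-dimensional, `f (n-1)` has a nearest point
`∑ rᵢ fᵢ` in `V`, and `g := f (n-1) - ∑ rᵢ fᵢ` realises the distance `d` from `f (n-1)` to `V`.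
For `S = ∑ uⱼ fⱼ`, scaling gives `|u (n-1)| d ≤ ‖S‖`, so `S - u (n-1) • g`, a combination of the
first `n - 1` vectors, has norm at most `2 ‖S‖`, and the induction hypothesis applies to it; the
matrix grows by the row `r ᵥ* A`. Each kernel is in `L^α` because it is a product of
one-dimensional factors with `|e^{iτx} - 1|^α |x|^{-αh-1} ≤ min(|τ| |x|, 2)^α |x|^{-αh-1}`, which
is integrable as `0 < αh < α`.
-/

open Set Filter Matrix

namespace Matrix

variable {n : ℕ} (A : Matrix (Fin n) (Fin n) ℝ) (r : Fin n → ℝ)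

def snocLowerTriangular : Matrix (Fin (n + 1)) (Fin (n + 1)) ℝ :=
  of <| Fin.snoc (α := fun _ => Fin (n + 1) → ℝ)
    (fun i => Fin.snoc (α := fun _ => ℝ) (A i) 0) (Fin.snoc (α := fun _ => ℝ) (r ᵥ* A) 1)

@[simp] theorem snocLowerTriangular_castSucc_castSucc (i j : Fin n) :
    A.snocLowerTriangular r i.castSucc j.castSucc = A i j := by
  simp [snocLowerTriangular]

@[simp] theorem snocLowerTriangular_castSucc_last (i : Fin n) :
    A.snocLowerTriangular r i.castSucc (Fin.last n) = 0 := by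
  simp [snocLowerTriangular]

@[simp] theorem snocLowerTriangular_last_castSucc (j : Fin n) :
    A.snocLowerTriangular r (Fin.last n) j.castSucc = (r ᵥ* A) j := by
  simp [snocLowerTriangular]

@[simp] theorem snocLowerTriangular_last_last :
    A.snocLowerTriangular r (Fin.last n) (Fin.last n) = 1 := by
  simp [snocLowerTriangular]

theorem snocLowerTriangular_eq_zero (hA : ∀ i j, i < j → A i j = 0) :
    ∀ i j, i < j → A.snocLowerTriangular r i j = 0 := by
  intro i j hij
  induction i using Fin.lastCases with
  | last => exact absurd hij (not_lt.2 (Fin.le_last j))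
  | cast i =>
    induction j using Fin.lastCases with
    | last => simp
    | cast j => simpa using hA i j (Fin.castSucc_lt_castSucc_iff.1 hij)

theorem snocLowerTriangular_diag (hA : ∀ i, A i i = 1) :
    ∀ i, A.snocLowerTriangular r i i = 1 := by
  intro i
  induction i using Fin.lastCases with
  | last => simp
  | cast i => simpa using hA i

theorem vecMul_snocLowerTriangular_last (u : Fin (n + 1) → ℝ) :
    (u ᵥ* A.snocLowerTriangular r) (Fin.last n) = u (Fin.last n) := by
  simp [vecMul, dotProduct, Fin.sum_univ_castSucc]

theorem vecMul_snocLowerTriangular_castSucc (u : Fin (n + 1) → ℝ) (j : Fin n) :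
    (u ᵥ* A.snocLowerTriangular r) j.castSucc = ((Fin.init u + u (Fin.last n) • r) ᵥ* A) j := by
  simp [vecMul, dotProduct, Fin.sum_univ_castSucc, add_mul, Finset.sum_add_distrib,
    Finset.mul_sum, mul_assoc, Fin.init]

end Matrix

section NormedSpace

variable {E : Type*} [NormedAddCommGroup E] [NormedSpace ℝ E]

theorem exists_forall_norm_sub_sum_smul_le {m : ℕ} (x : E) (g : Fin m → E) :
    ∃ r : Fin m → ℝ, ∀ s : Fin m → ℝ, ‖x - ∑ i, r i • g i‖ ≤ ‖x - ∑ i, s i • g i‖ := by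
  let V := Submodule.span ℝ (range g)
  have : FiniteDimensional ℝ V := FiniteDimensional.span_of_finite ℝ (finite_range g)
  have hcoercive : Tendsto (fun y : V => ‖x - (y : E)‖) (cocompact V) atTop := by
    refine tendsto_atTop_mono (fun y => ?_)
      (tendsto_atTop_add_const_right _ (-‖x‖) tendsto_norm_cocompact_atTop)
    have := norm_sub_norm_le (y : E) x
    rw [norm_sub_rev] at this
    simp only [Submodule.coe_norm]
    linarith
  obtain ⟨y, hy⟩ := (continuous_const.sub continuous_subtype_val).norm.exists_forall_le hcoercive
  obtain ⟨r, hr⟩ := (Submodule.mem_span_range_iff_exists_fun ℝ).1 y.2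
  refine ⟨r, fun s => hr ▸ hy ⟨∑ i, s i • g i, ?_⟩⟩
  exact Submodule.sum_mem _ fun i _ => Submodule.smul_mem _ _ (Submodule.subset_span ⟨i, rfl⟩)

theorem abs_mul_iInf_norm_sub_sum_smul_le {m : ℕ} (x : E) (g : Fin m → E) (a : ℝ)
    (s : Fin m → ℝ) :
    |a| * ⨅ r : Fin m → ℝ, ‖x - ∑ i, r i • g i‖ ≤ ‖∑ i, s i • g i + a • x‖ := by
  rcases eq_or_ne a 0 with rfl | ha
  · simp
  have hbdd : BddBelow (range fun r : Fin m → ℝ => ‖x - ∑ i, r i • g i‖) :=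
    ⟨0, by rintro _ ⟨r, rfl⟩; exact norm_nonneg _⟩
  have hrescale : x - ∑ i, (-(a⁻¹ * s i)) • g i = a⁻¹ • (∑ i, s i • g i + a • x) := by
    simp only [neg_smul, Finset.sum_neg_distrib, sub_neg_eq_add, smul_add,
      Finset.smul_sum, smul_smul, inv_mul_cancel₀ ha, one_smul]
    exact add_comm _ _
  calc |a| * ⨅ r : Fin m → ℝ, ‖x - ∑ i, r i • g i‖
      ≤ |a| * ‖a⁻¹ • (∑ i, s i • g i + a • x)‖ :=
        mul_le_mul_of_nonneg_left (hrescale ▸ ciInf_le hbdd _) (abs_nonneg a)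
    _ = ‖∑ i, s i • g i + a • x‖ := by
        rw [norm_smul, Real.norm_eq_abs, abs_inv, mul_inv_cancel_left₀ (abs_ne_zero.2 ha)]

noncomputable def distPrevSpan {n : ℕ} (f : Fin n → E) (j : Fin n) : ℝ :=
  ⨅ r : Fin j → ℝ, ‖f j - ∑ i : Fin j, r i • f (Fin.castLE (le_of_lt j.isLt) i)‖

theorem distPrevSpan_of_val_eq_zero {n : ℕ} (f : Fin n → E) (j : Fin n) (hj : (j : ℕ) = 0) :
    distPrevSpan f j = ‖f j‖ := by
  obtain ⟨_, hlt⟩ := j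
  subst hj
  simp [distPrevSpan]

theorem distPrevSpan_castSucc {n : ℕ} (f : Fin (n + 1) → E) (j : Fin n) :
    distPrevSpan f j.castSucc = distPrevSpan (Fin.init f) j :=
  rfl

theorem exists_lowerTriangular_sum_abs_vecMul_mul_distPrevSpan_le {n : ℕ} (f : Fin n → E) :
    ∃ A : Matrix (Fin n) (Fin n) ℝ, (∀ i j, i < j → A i j = 0) ∧ (∀ i, A i i = 1) ∧
      ∀ u : Fin n → ℝ,
        ∑ j, |(u ᵥ* A) j| * distPrevSpan f j ≤ (2 ^ n - 1) * ‖∑ j, u j • f j‖ := by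
  induction n with
  | zero => exact ⟨1, by simp, by simp, fun u => by simp⟩
  | succ n ih =>
    obtain ⟨A, hA_lower, hA_diag, hA⟩ := ih (Fin.init f)
    obtain ⟨r, hr⟩ := exists_forall_norm_sub_sum_smul_le (f (Fin.last n)) (Fin.init f)
    refine ⟨A.snocLowerTriangular r, snocLowerTriangular_eq_zero A r hA_lower,
      snocLowerTriangular_diag A r hA_diag, fun u => ?_⟩
    set a := u (Fin.last n)
    set S := ∑ j, u j • f j
    set g := f (Fin.last n) - ∑ i, r i • Fin.init f i
    set D := distPrevSpan f (Fin.last n)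
    have hS : S = ∑ i, Fin.init u i • Fin.init f i + a • f (Fin.last n) :=
      Fin.sum_univ_castSucc _
    have hD : |a| * D ≤ ‖S‖ := hS ▸ abs_mul_iInf_norm_sub_sum_smul_le _ _ _ _
    have hg : |a| * ‖g‖ ≤ ‖S‖ := (mul_le_mul_of_nonneg_left (le_ciInf hr) (abs_nonneg a)).trans hD
    have hw : ∑ i, (Fin.init u + a • r) i • Fin.init f i = S - a • g := by
      simp only [hS, g, Pi.add_apply, Pi.smul_apply, add_smul, mul_smul, Finset.sum_add_distrib,
        ← Finset.smul_sum, smul_sub, smul_eq_mul]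
      abel
    have hprev : ∑ j, |((Fin.init u + a • r) ᵥ* A) j| * distPrevSpan (Fin.init f) j
        ≤ (2 ^ n - 1) * (2 * ‖S‖) := by
      refine (hA _).trans (mul_le_mul_of_nonneg_left ?_ (by simp [one_le_pow₀]))
      calc ‖∑ i, (Fin.init u + a • r) i • Fin.init f i‖ = ‖S - a • g‖ := by rw [hw]
        _ ≤ ‖S‖ + |a| * ‖g‖ := by rw [← Real.norm_eq_abs, ← norm_smul]; exact norm_sub_le _ _
        _ ≤ 2 * ‖S‖ := by linarith
    rw [Fin.sum_univ_castSucc]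
    simp only [vecMul_snocLowerTriangular_castSucc, vecMul_snocLowerTriangular_last,
      distPrevSpan_castSucc]
    calc _ ≤ (2 ^ n - 1) * (2 * ‖S‖) + ‖S‖ := add_le_add hprev hD
      _ = (2 ^ (n + 1) - 1) * ‖S‖ := by ring

end NormedSpace

section Kernel

open Complex

theorem norm_cexp_I_mul_sub_one_le_min (τ x : ℝ) :
    ‖cexp (I * τ * x) - 1‖ ≤ min (|τ| * |x|) 2 := by
  have hτx : I * τ * x = I * ((τ * x : ℝ) : ℂ) := by push_cast; ring
  refine le_min ?_ ?_
  · simpa [hτx, abs_mul] using Real.norm_exp_I_mul_ofReal_sub_one_le (x := τ * x)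
  · calc ‖cexp (I * τ * x) - 1‖ ≤ ‖cexp (I * ((τ * x : ℝ) : ℂ))‖ + ‖(1 : ℂ)‖ := by
          rw [hτx]; exact norm_sub_le _ _
      _ = 2 := by rw [mul_comm, norm_exp_ofReal_mul_I]; norm_num

theorem integrableOn_Ioi_min_mul_rpow_mul_rpow {c M α s : ℝ} (hc : 0 ≤ c) (hM : 0 ≤ M)
    (hα : 0 < α) (hs : 0 < s) (hsα : s < α) :
    IntegrableOn (fun y : ℝ => min (c * y) M ^ α * y ^ (-s - 1)) (Ioi 0) := by
  have hmeas : AEStronglyMeasurable (fun y : ℝ => min (c * y) M ^ α * y ^ (-s - 1)) :=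
    by fun_prop
  rw [← Ioc_union_Ioi_eq_Ioi zero_le_one]
  refine IntegrableOn.union ?_ ?_
  · have hdom : IntegrableOn (fun y : ℝ => c ^ α * y ^ (α - s - 1)) (Ioc 0 1) :=
      (((intervalIntegral.integrableOn_Ioo_rpow_iff one_pos).2 (by linarith)).congr_set_ae
        Ioo_ae_eq_Ioc.symm).const_mul _
    refine hdom.mono' hmeas.restrict ((ae_restrict_mem measurableSet_Ioc).mono fun y hy => ?_)
    have hy0 : 0 < y := hy.1
    rw [Real.norm_of_nonneg (by positivity)]
    calc min (c * y) M ^ α * y ^ (-s - 1) ≤ (c * y) ^ α * y ^ (-s - 1) := by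
          gcongr; exact min_le_left _ _
      _ = c ^ α * y ^ (α - s - 1) := by
          rw [Real.mul_rpow hc hy0.le, mul_assoc, ← Real.rpow_add hy0]; ring_nf
  · have hdom : IntegrableOn (fun y : ℝ => M ^ α * y ^ (-s - 1)) (Ioi 1) :=
      (integrableOn_Ioi_rpow_of_lt (by linarith) one_pos).const_mul _
    refine hdom.mono' hmeas.restrict ((ae_restrict_mem measurableSet_Ioi).mono fun y hy => ?_)
    have hy0 : (0 : ℝ) < y := zero_lt_one.trans hy
    rw [Real.norm_of_nonneg (by positivity)]
    gcongr; exact min_le_right _ _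

theorem integrable_norm_cexp_I_mul_sub_one_rpow_mul_abs_rpow {τ α s : ℝ} (hα : 0 < α)
    (hs : 0 < s) (hsα : s < α) :
    Integrable (fun x : ℝ => ‖cexp (I * τ * x) - 1‖ ^ α * |x| ^ (-s - 1)) := by
  have hradial : Integrable (fun x : ℝ => min (|τ| * ‖x‖) 2 ^ α * ‖x‖ ^ (-s - 1)) :=
    (integrable_fun_norm_addHaar volume (f := fun y => min (|τ| * y) 2 ^ α * y ^ (-s - 1))).2
      (by simpa using integrableOn_Ioi_min_mul_rpow_mul_rpow (abs_nonneg τ) zero_le_two hα hs hsα)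
  refine hradial.mono' (by fun_prop) (ae_of_all _ fun x => ?_)
  rw [Real.norm_of_nonneg (by positivity), Real.norm_eq_abs]
  gcongr
  exact norm_cexp_I_mul_sub_one_le_min τ x

theorem norm_Fker_rpow {α : ℝ} (hα : α ≠ 0) {N : ℕ} (H t lam : Fin N → ℝ) :
    ‖Fker α N H t lam‖ ^ α =
      ∏ l, ‖cexp (I * t l * lam l) - 1‖ ^ α * |lam l| ^ (-(α * H l) - 1) := by
  rw [Fker, norm_prod, ← Real.finsetProd_rpow _ _ fun l _ => norm_nonneg _]
  refine Finset.prod_congr rfl fun l _ => ?_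
  rw [norm_mul, norm_real, Real.norm_of_nonneg (by positivity),
    Real.mul_rpow (norm_nonneg _) (by positivity), ← Real.rpow_mul (abs_nonneg _)]
  congr 2
  field_simp
  ring

theorem memLp_Fker {α : ℝ} (hα : 0 < α) {N : ℕ} {H : Fin N → ℝ}
    (hH : ∀ l, 0 < H l ∧ H l < 1) (t : Fin N → ℝ) :
    MemLp (Fker α N H t) (ENNReal.ofReal α) volume := by
  refine (integrable_norm_rpow_iff (by unfold Fker; fun_prop) (by simpa using hα)
    ENNReal.ofReal_ne_top).1 ?_
  simp only [ENNReal.toReal_ofReal hα.le, norm_Fker_rpow hα.ne']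
  exact Integrable.fintype_prod (𝕜 := ℝ) fun l =>
    integrable_norm_cexp_I_mul_sub_one_rpow_mul_abs_rpow hα (mul_pos hα (hH l).1)
      (by nlinarith [hH l])

end Kernel

theorem MeasureTheory.Lp.norm_eq_integral_norm_rpow_of_ae_eq {X E : Type*} [MeasurableSpace X]
    {μ : Measure X} [NormedAddCommGroup E] {α : ℝ} (hα : 0 < α)
    {g : Lp E (ENNReal.ofReal α) μ} {f : X → E} (hgf : g =ᵐ[μ] f) :
    ‖g‖ = (∫ x, ‖f x‖ ^ α ∂μ) ^ (1 / α) := by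
  rw [Lp.norm_def, eLpNorm_congr_ae hgf,
    ((Lp.memLp g).ae_eq hgf).eLpNorm_eq_integral_rpow_norm (by simpa using hα)
      ENNReal.ofReal_ne_top, ENNReal.toReal_ofReal hα.le, ENNReal.toReal_ofReal (by positivity),
    one_div]

theorem MeasureTheory.MemLp.coeFn_sum_smul_toLp {X E : Type*} [MeasurableSpace X]
    {μ : Measure X} [NormedAddCommGroup E] [NormedSpace ℝ E] {p : ENNReal} {ι : Type*}
    (s : Finset ι) (c : ι → ℝ) {f : ι → X → E} (hf : ∀ i, MemLp (f i) p μ) :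
    ⇑(∑ i ∈ s, c i • (hf i).toLp (f i)) =ᵐ[μ] fun x => ∑ i ∈ s, c i • f i x := by
  have hterm : ∀ᵐ x ∂μ, ∀ i ∈ s, (c i • (hf i).toLp (f i)) x = c i • f i x :=
    (eventually_all_finset s).2 fun i _ =>
      (Lp.coeFn_smul (c i) ((hf i).toLp (f i))).trans ((hf i).coeFn_toLp.fun_comp (c i • ·))
  filter_upwards [Lp.coeFn_fun_finsetSum s fun i => c i • (hf i).toLp (f i), hterm]
    with x hsum hx
  rw [hsum]
  exact Finset.sum_congr rfl hx

/-- For `α ∈ [1,2]`, `H ∈ (0,1)^N`, `0 < a < b` and every `n ≥ 2` there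
exists `c(n) > 0` such that for all `t^1, …, t^n ∈ [a,b]^N` (encoded by `t : Fin n → ℝ^N`)
there exists a real lower-triangular `n×n` matrix `A` with unit diagonal such that for all
`u ∈ ℝ^n`, writing `v = u A`,
`(∫ |∑_j u_j F(t^j,λ)|^α dλ)^{1/α} ≥ c(n) (|v_1| ‖F(t^1,·)‖_α + ∑_{j=2}^n |v_j| dist_α(F(t^j,·),
span_ℝ{F(t^1,·),…,F(t^{j-1},·)}))`. -/
theorem stmt_12 (α : ℝ) (hα : 1 ≤ α) (N : ℕ)
    (H : Fin N → ℝ) (hH : ∀ l, 0 < H l ∧ H l < 1)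
    (a b : ℝ)
    (n : ℕ) (hn : 2 ≤ n) :
    ∃ c : ℝ, 0 < c ∧ ∀ t : Fin n → Fin N → ℝ, (∀ i l, t i l ∈ Set.Icc a b) →
      ∃ A : Matrix (Fin n) (Fin n) ℝ,
        (∀ i j : Fin n, i < j → A i j = 0) ∧ (∀ i : Fin n, A i i = 1) ∧
        ∀ u : Fin n → ℝ,
          (∫ lam : Fin N → ℝ, ‖∑ j : Fin n, (u j : ℂ) * Fker α N H (t j) lam‖ ^ α) ^ (1 / α)
            ≥ c * (|Matrix.vecMul u A ⟨0, by omega⟩| *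
                (∫ lam : Fin N → ℝ, ‖Fker α N H (t ⟨0, by omega⟩) lam‖ ^ α) ^ (1 / α)
              + ∑ j ∈ Finset.univ.filter (fun j : Fin n => j ≠ ⟨0, by omega⟩),
                  |Matrix.vecMul u A j| *
                    ⨅ r : Fin (j : ℕ) → ℝ,
                      (∫ lam : Fin N → ℝ,
                        ‖Fker α N H (t j) lam -
                          ∑ i : Fin (j : ℕ), (r i : ℂ) *
                            Fker α N H (t (Fin.castLE (le_of_lt j.isLt) i)) lam‖ ^ α)
                        ^ (1 / α)) := by
  have hα0 : 0 < α := by linarith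
  have : Fact (1 ≤ ENNReal.ofReal α) := ⟨by simpa using ENNReal.ofReal_le_ofReal hα⟩
  have hC : 0 < (2 : ℝ) ^ n - 1 := by
    simpa using one_lt_pow₀ (one_lt_two : (1 : ℝ) < 2) (by omega : n ≠ 0)
  refine ⟨(2 ^ n - 1)⁻¹, inv_pos.2 hC, fun t _ => ?_⟩
  have hmem (j : Fin n) := memLp_Fker hα0 hH (t j)
  set F : Fin n → Lp ℂ (ENNReal.ofReal α) (volume : Measure (Fin N → ℝ)) :=
    fun j => (hmem j).toLp _
  obtain ⟨A, hA_lower, hA_diag, hA⟩ := exists_lowerTriangular_sum_abs_vecMul_mul_distPrevSpan_le F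
  refine ⟨A, hA_lower, hA_diag, fun u => ?_⟩
  set j₀ : Fin n := ⟨0, by omega⟩
  have hnorm_sum := Lp.norm_eq_integral_norm_rpow_of_ae_eq hα0
    (MemLp.coeFn_sum_smul_toLp Finset.univ u hmem)
  have hnorm_first := Lp.norm_eq_integral_norm_rpow_of_ae_eq hα0 (hmem j₀).coeFn_toLp
  have hdist (j : Fin n) : distPrevSpan F j = _ := iInf_congr fun r =>
    Lp.norm_eq_integral_norm_rpow_of_ae_eq hα0
      ((Lp.coeFn_sub _ _).trans
        ((hmem j).coeFn_toLp.sub (MemLp.coeFn_sum_smul_toLp Finset.univ r fun _ => hmem _)))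
  simp only [Complex.real_smul, Pi.sub_apply] at hnorm_sum hdist
  have key := hA u
  rw [← Finset.add_sum_erase _ _ (Finset.mem_univ j₀), distPrevSpan_of_val_eq_zero F j₀ rfl,
    ← inv_mul_le_iff₀ hC] at key
  rw [ge_iff_le, ← hnorm_sum, ← hnorm_first, Finset.filter_ne']
  simpa only [hdist] using key
end
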